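/- Define γ(I) = S / (M + I + σ²) and R(I) = log₂(1 + γ(I)) for constants S, M ≥ 0, σ² > 0. Then R is convex and decreasing in I on [0, ∞), and R(0) − R(I) ≤ log₂(1 + I/σ²) for all I ≥ 0, i.e., the sum-rate loss per user due to jamming interference of power I is at most log₂(1 + I/σ²). -/

import Mathlib

open Real Set

/-- The per-user rate `R(I) = log₂(1 + S/(M+I+σ²))` is convex and decreasing
in the interference power `I` on `[0,∞)`, and the rate loss due to jamming
interference of power `I` is at most `log₂(1 + I/σ²)`. -/
theorem rate_loss_bound (S M σ2 : ℝ) (hS : 0 ≤ S) (hM : 0 ≤ M) (hσ : 0 < σ2) :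
    let R : ℝ → ℝ := fun I => Real.logb 2 (1 + S / (M + I + σ2))
    ConvexOn ℝ (Set.Ici (0 : ℝ)) R ∧
    AntitoneOn R (Set.Ici (0 : ℝ)) ∧
    ∀ I : ℝ, 0 ≤ I → R 0 - R I ≤ Real.logb 2 (1 + I / σ2) := by
  intro R
  set c : ℝ := M + σ2 with hc_def
  have hc : 0 < c := by positivity
  have hpos : ∀ x : ℝ, 0 ≤ x → 0 < M + x + σ2 := fun x hx => by positivity
  have harg : ∀ x : ℝ, 0 ≤ x → 0 < 1 + S / (M + x + σ2) := by
    intro x hx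
    have h := hpos x hx
    positivity
  -- auxiliary function
  set f : ℝ → ℝ := fun x => Real.log (c + S + x) - Real.log (c + x) with hf_def
  have hcx : ∀ x : ℝ, 0 ≤ x → 0 < c + x := fun x hx => by linarith
  have hcSx : ∀ x : ℝ, 0 ≤ x → 0 < c + S + x := fun x hx => by linarith
  have hR_eq : ∀ x ∈ Set.Ici (0 : ℝ), R x = (Real.log 2)⁻¹ * f x := by
    intro x hx
    have h1 : (0:ℝ) < c + x := hcx x hx
    have h2 : (0:ℝ) < c + S + x := hcSx x hx
    have h3 : M + x + σ2 = c + x := by ring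
    show Real.logb 2 (1 + S / (M + x + σ2)) = (Real.log 2)⁻¹ * f x
    rw [h3]
    have h4 : 1 + S / (c + x) = (c + S + x) / (c + x) := by
      field_simp; ring
    rw [h4, Real.logb, Real.log_div (ne_of_gt h2) (ne_of_gt h1)]
    simp [hf_def, div_eq_inv_mul]
  -- derivative of f on the interior
  have hderiv : ∀ x : ℝ, 0 ≤ x →
      HasDerivAt f ((c + S + x)⁻¹ - (c + x)⁻¹) x := by
    intro x hx
    have h1 : HasDerivAt (fun y : ℝ => c + S + y) 1 x := (hasDerivAt_id x).const_add _
    have h2 : HasDerivAt (fun y : ℝ => c + y) 1 x := (hasDerivAt_id x).const_add _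
    have l1 : HasDerivAt (fun y : ℝ => Real.log (c + S + y)) ((c + S + x)⁻¹ * 1) x :=
      (Real.hasDerivAt_log (ne_of_gt (hcSx x hx))).comp x h1
    have l2 : HasDerivAt (fun y : ℝ => Real.log (c + y)) ((c + x)⁻¹ * 1) x :=
      (Real.hasDerivAt_log (ne_of_gt (hcx x hx))).comp x h2
    have := l1.sub l2
    simp only [mul_one] at this
    exact this
  have hderiv_eq : ∀ x : ℝ, 0 ≤ x → deriv f x = (c + S + x)⁻¹ - (c + x)⁻¹ :=
    fun x hx => (hderiv x hx).deriv
  have hcont : ContinuousOn f (Set.Ici (0 : ℝ)) := by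
    intro x hx
    exact ((hderiv x hx).continuousAt).continuousWithinAt
  have hdiff : DifferentiableOn ℝ f (interior (Set.Ici (0 : ℝ))) := by
    rw [interior_Ici]
    intro x hx
    exact ((hderiv x (le_of_lt hx)).differentiableAt).differentiableWithinAt
  have hmono : MonotoneOn (deriv f) (interior (Set.Ici (0 : ℝ))) := by
    rw [interior_Ici]
    intro x hx y hy hxy
    rw [hderiv_eq x (le_of_lt hx), hderiv_eq y (le_of_lt hy)]
    have hx0 : (0:ℝ) ≤ x := le_of_lt hx
    have hy0 : (0:ℝ) ≤ y := le_of_lt hy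
    have p1 := hcx x hx0; have p2 := hcSx x hx0
    have p3 := hcx y hy0; have p4 := hcSx y hy0
    have e1 : (c + S + x)⁻¹ - (c + x)⁻¹ = -(S / ((c + S + x) * (c + x))) := by
      field_simp
      ring
    have e2 : (c + S + y)⁻¹ - (c + y)⁻¹ = -(S / ((c + S + y) * (c + y))) := by
      field_simp
      ring
    rw [e1, e2, neg_le_neg_iff]
    have hAB : (c + S + x) * (c + x) ≤ (c + S + y) * (c + y) := by nlinarith
    have hA : (0:ℝ) < (c + S + x) * (c + x) := by positivity
    exact div_le_div_of_nonneg_left hS hA hAB |>.trans_eq rfl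
  have hconv_f : ConvexOn ℝ (Set.Ici (0 : ℝ)) f :=
    hmono.convexOn_of_deriv (convex_Ici 0) hcont hdiff
  have hlog2 : (0:ℝ) < Real.log 2 := Real.log_pos (by norm_num)
  have hconv_g : ConvexOn ℝ (Set.Ici (0 : ℝ)) (fun x => (Real.log 2)⁻¹ * f x) := by
    have := hconv_f.smul (c := (Real.log 2)⁻¹) (by positivity)
    simpa [smul_eq_mul] using this
  refine ⟨?_, ?_, ?_⟩
  · -- convexity
    refine ⟨convex_Ici 0, fun x hx y hy a b ha hb hab => ?_⟩
    have hmem : a • x + b • y ∈ Set.Ici (0 : ℝ) := (convex_Ici 0) hx hy ha hb hab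
    rw [show R (a • x + b • y) = (Real.log 2)⁻¹ * f (a • x + b • y) from hR_eq _ hmem,
        show R x = (Real.log 2)⁻¹ * f x from hR_eq _ hx,
        show R y = (Real.log 2)⁻¹ * f y from hR_eq _ hy]
    exact hconv_g.2 hx hy ha hb hab
  · -- antitone
    intro x hx y hy hxy
    have hx0 : (0:ℝ) ≤ x := hx
    have hy0 : (0:ℝ) ≤ y := hy
    have h1 := hpos x hx0
    have h2 := hpos y hy0
    apply Real.logb_le_logb_of_le (by norm_num) (harg y hy0)
    have : S / (M + y + σ2) ≤ S / (M + x + σ2) :=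
      div_le_div_of_nonneg_left hS h1 (by linarith)
    linarith
  · -- rate loss bound
    intro I hI
    have h1 := harg 0 le_rfl
    have h2 := harg I hI
    have h3 : (0:ℝ) < 1 + I / σ2 := by positivity
    rw [sub_le_iff_le_add, ← Real.logb_mul (ne_of_gt h3) (ne_of_gt h2)]
    apply Real.logb_le_logb_of_le (by norm_num) h1
    have d1 := hpos 0 le_rfl
    have d2 := hpos I hI
    have key : ((1 + I / σ2) * (1 + S / (M + I + σ2))) - (1 + S / (M + 0 + σ2)) =
        I * ((M + σ2) ^ 2 + (M + σ2) * S + I * (M + σ2) - σ2 * S) /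
          (σ2 * (M + I + σ2) * (M + 0 + σ2)) := by
      field_simp
      ring
    have hnum : 0 ≤ I * ((M + σ2) ^ 2 + (M + σ2) * S + I * (M + σ2) - σ2 * S) := by
      apply mul_nonneg hI
      nlinarith [mul_nonneg hM hS, mul_nonneg hI hM, mul_nonneg hI hσ.le]
    have : 0 ≤ ((1 + I / σ2) * (1 + S / (M + I + σ2))) - (1 + S / (M + 0 + σ2)) := by
      rw [key]; positivity
    linarith
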